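/- For a fixed elimination ordering P, elimination complexity is monotone under taking subgraphs: if H is a subgraph of G on the same vertex set, then C(H, P) ≤ C(G, P). -/

import Mathlib

open Finset

/-- Node elimination of a single vertex `v`: remove `v` (it becomes isolated) and
complete its remaining neighborhood into a clique. -/
def elimVertex {V : Type*} (G : SimpleGraph V) (v : V) : SimpleGraph V where
  Adj a b := a ≠ b ∧ a ≠ v ∧ b ≠ v ∧ (G.Adj a b ∨ (G.Adj v a ∧ G.Adj v b))
  symm := by
    refine ⟨?_⟩
    intro a b h
    exact ⟨h.1.symm, h.2.2.1, h.2.1,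
      h.2.2.2.elim (fun x => Or.inl x.symm) (fun x => Or.inr ⟨x.2, x.1⟩)⟩
  loopless := by
    refine ⟨?_⟩
    intro a h
    exact h.1 rfl

/-- `elimGraph G P i` is the elimination graph after eliminating `P 0, …, P (i-1)`. -/
def elimGraph {V : Type*} (G : SimpleGraph V) (P : ℕ → V) : ℕ → SimpleGraph V
  | 0 => G
  | (i + 1) => elimVertex (elimGraph G P i) (P i)

/-- Elimination degree of the `i`-th eliminated vertex (0-indexed). -/
noncomputable def elimDeg {V : Type*} (G : SimpleGraph V) (P : ℕ → V) (i : ℕ) : ℕ :=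
  ((elimGraph G P i).neighborSet (P i)).ncard

/-- Scalar elimination complexity `C(G, P) = Σ_i d(i, G, P)²`. -/
noncomputable def elimComplexity {V : Type*} (G : SimpleGraph V) (P : ℕ → V) (n : ℕ) : ℕ :=
  ∑ i ∈ Finset.range n, (elimDeg G P i) ^ 2

lemma elimVertex_mono {V : Type*} {H G : SimpleGraph V} (h : H ≤ G) (v : V) :
    elimVertex H v ≤ elimVertex G v := fun _ _ ⟨hne, hav, hbv, hadj⟩ =>
  ⟨hne, hav, hbv, hadj.imp (fun hab => h hab) (fun ⟨hva, hvb⟩ => ⟨h hva, h hvb⟩)⟩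

lemma elimGraph_mono {V : Type*} {H G : SimpleGraph V} (h : H ≤ G) (P : ℕ → V) :
    ∀ i, elimGraph H P i ≤ elimGraph G P i
  | 0 => h
  | i + 1 => elimVertex_mono (elimGraph_mono h P i) (P i)

lemma elimDeg_mono {V : Type*} [Finite V] {H G : SimpleGraph V} (h : H ≤ G) (P : ℕ → V)
    (i : ℕ) : elimDeg H P i ≤ elimDeg G P i :=
  Set.ncard_le_ncard (SimpleGraph.neighborSet_mono (elimGraph_mono h P i) (P i))

/-- elimination complexity is monotone under taking subgraphs
on the same vertex set, for a fixed elimination ordering. -/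
theorem stmt2 {V : Type*} [Fintype V] (H G : SimpleGraph V) (hHG : H ≤ G)
    (P : ℕ → V) (n : ℕ) :
    elimComplexity H P n ≤ elimComplexity G P n :=
  Finset.sum_le_sum fun i _ => Nat.pow_le_pow_left (elimDeg_mono hHG P i) 2
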